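/- arXiv:2407.13510 — 2 statements merged into one kernel-verified Lean document; each statement's English description precedes it below -/
import Mathlib

section
/- The sign-alignment configuration achieves at least half of the optimal 1-bit SNR: if φ* maximizes γ(φ) = |c^T φ|² over φ ∈ {-1,+1}^N, then γ(φ^SA) ≥ (1/2) γ(φ*). -/
open Finset

/-- The sign of a real number, returning `+1` when the argument is `0`. -/
noncomputable def sgn (t : ℝ) : ℝ := if 0 ≤ t then 1 else -1

/-- The SNR objective `γ(φ) = |c^T φ|²`. -/
noncomputable def gam {N : ℕ} (c : Fin N → ℂ) (φ : Fin N → ℝ) : ℝ :=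
  ‖∑ i, c i * (φ i : ℂ)‖ ^ 2

/-- The sign-alignment configuration: the better of `sign(Re c)` and `sign(Im c)`. -/
noncomputable def phiSA {N : ℕ} (c : Fin N → ℂ) : Fin N → ℝ :=
  if gam c (fun i => sgn (c i).re) ≥ gam c (fun i => sgn (c i).im)
  then (fun i => sgn (c i).re) else (fun i => sgn (c i).im)

/-! For every sign vector `φ`, writing `γ(φ) = (∑ Re cᵢ φᵢ)² + (∑ Im cᵢ φᵢ)²`, each sum is bounded in
absolute value by `∑ |Re cᵢ|` (resp. `∑ |Im cᵢ|`), which is attained by `φ = sign Re c` (resp.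
`sign Im c`). Hence `γ(φ) ≤ γ(sign Re c) + γ(sign Im c) ≤ 2 γ(φ^SA)`. -/

lemma mul_sgn_self (t : ℝ) : t * sgn t = |t| := by
  unfold sgn
  split_ifs with h
  · rw [mul_one, abs_of_nonneg h]
  · rw [abs_of_neg (not_le.mp h), mul_neg_one]

lemma abs_sum_mul_le_sum_mul_sgn {ι : Type*} (s : Finset ι) (a φ : ι → ℝ)
    (hφ : ∀ i ∈ s, |φ i| ≤ 1) :
    |∑ i ∈ s, a i * φ i| ≤ ∑ i ∈ s, a i * sgn (a i) :=
  calc |∑ i ∈ s, a i * φ i| ≤ ∑ i ∈ s, |a i * φ i| := abs_sum_le_sum_abs _ _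
    _ ≤ ∑ i ∈ s, |a i| := sum_le_sum fun i hi => by
        rw [abs_mul]
        exact mul_le_of_le_one_right (abs_nonneg _) (hφ i hi)
    _ = ∑ i ∈ s, a i * sgn (a i) := sum_congr rfl fun i _ => (mul_sgn_self _).symm

lemma sq_sum_mul_le_sq_sum_mul_sgn {ι : Type*} (s : Finset ι) (a φ : ι → ℝ)
    (hφ : ∀ i ∈ s, |φ i| ≤ 1) :
    (∑ i ∈ s, a i * φ i) ^ 2 ≤ (∑ i ∈ s, a i * sgn (a i)) ^ 2 :=
  sq_le_sq' (abs_le.mp (abs_sum_mul_le_sum_mul_sgn s a φ hφ)).1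
    (abs_le.mp (abs_sum_mul_le_sum_mul_sgn s a φ hφ)).2

lemma gam_eq_sq_add_sq {N : ℕ} (c : Fin N → ℂ) (φ : Fin N → ℝ) :
    gam c φ = (∑ i, (c i).re * φ i) ^ 2 + (∑ i, (c i).im * φ i) ^ 2 := by
  simp only [gam, Complex.sq_norm, Complex.normSq_apply, Complex.re_sum, Complex.im_sum,
    Complex.re_mul_ofReal, Complex.im_mul_ofReal]
  ring

lemma gam_le_gam_sgn_re_add_gam_sgn_im {N : ℕ} (c : Fin N → ℂ) (φ : Fin N → ℝ)
    (hφ : ∀ i, |φ i| ≤ 1) :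
    gam c φ ≤ gam c (fun i => sgn (c i).re) + gam c (fun i => sgn (c i).im) := by
  have hre := sq_sum_mul_le_sq_sum_mul_sgn univ (fun i => (c i).re) φ fun i _ => hφ i
  have him := sq_sum_mul_le_sq_sum_mul_sgn univ (fun i => (c i).im) φ fun i _ => hφ i
  simp only [gam_eq_sq_add_sq] at hre him ⊢
  linarith [sq_nonneg (∑ i, (c i).im * sgn (c i).re), sq_nonneg (∑ i, (c i).re * sgn (c i).im)]

lemma gam_phiSA {N : ℕ} (c : Fin N → ℂ) :
    gam c (phiSA c) = max (gam c (fun i => sgn (c i).re)) (gam c (fun i => sgn (c i).im)) := by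
  unfold phiSA
  split_ifs with h
  · exact (max_eq_left h).symm
  · exact (max_eq_right (le_of_not_ge h)).symm

theorem stmt2_general {N : ℕ} (c : Fin N → ℂ) (φstar : Fin N → ℝ)
    (hstar : ∀ i, φstar i = 1 ∨ φstar i = -1) :
    gam c (phiSA c) ≥ (1 / 2) * gam c φstar := by
  have hφ : ∀ i, |φstar i| ≤ 1 := fun i => by rcases hstar i with h | h <;> simp [h]
  have hsum := gam_le_gam_sgn_re_add_gam_sgn_im c φstar hφ
  rw [gam_phiSA]
  linarith [le_max_left (gam c (fun i => sgn (c i).re)) (gam c (fun i => sgn (c i).im)),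
    le_max_right (gam c (fun i => sgn (c i).re)) (gam c (fun i => sgn (c i).im))]

theorem stmt2 {N : ℕ} (c : Fin N → ℂ) (φstar : Fin N → ℝ)
    (hstar : ∀ i, φstar i = 1 ∨ φstar i = -1)
    (hmax : ∀ φ : Fin N → ℝ, (∀ i, φ i = 1 ∨ φ i = -1) → gam c φ ≤ gam c φstar) :
    gam c (phiSA c) ≥ (1 / 2) * gam c φstar :=
  stmt2_general c φstar hstar
end

section
/- If x, y, z, w are independent real Gaussian random variables each with mean 0 and variance 1/2, then E[|xz − yw|] = 1/2. -/
/-!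
Let `x, y, z, w` be independent centred Gaussians of variance `v`. Conditionally on
`(x, y) = (a, b)`, the variable `a z - b w` is a centred Gaussian of variance `(a² + b²) v`, so its
mean absolute value is `√(a² + b²) · √(2v / π)`. Integrating in polar coordinates gives
`E √(x² + y²) = √(π v / 2)`, and the product of the two factors is `v`.
-/

open MeasureTheory ProbabilityTheory Real Set
open scoped NNReal

theorem integral_comp_sqrt_sq_add_sq {E : Type*} [NormedAddCommGroup E] [NormedSpace ℝ E]
    (f : ℝ → E) :
    ∫ p : ℝ × ℝ, f √(p.1 ^ 2 + p.2 ^ 2) = (2 * π) • ∫ r in Ioi 0, r • f r := by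
  have hradius : ∀ p ∈ Ioi (0 : ℝ) ×ˢ Ioo (-π) π,
      p.1 • f √((p.1 * cos p.2) ^ 2 + (p.1 * sin p.2) ^ 2) = p.1 • f p.1 := by
    rintro ⟨r, θ⟩ ⟨hr, -⟩
    have : (r * cos θ) ^ 2 + (r * sin θ) ^ 2 = r ^ 2 := by
      linear_combination r ^ 2 * cos_sq_add_sin_sq θ
    simp only [this, sqrt_sq hr.le]
  rw [← integral_comp_polarCoord_symm, polarCoord_target]
  simp only [polarCoord_symm_apply]
  rw [setIntegral_congr_fun (measurableSet_Ioi.prod measurableSet_Ioo) hradius,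
    Measure.volume_eq_prod, ← Measure.prod_restrict, integral_fun_fst (fun r => r • f r),
    measureReal_restrict_apply_univ, volume_real_Ioo_of_le (by linarith [pi_pos])]
  ring_nf

theorem integral_Ioi_mul_exp_neg_mul_sq {b : ℝ} (hb : 0 < b) :
    ∫ r in Ioi (0 : ℝ), r * exp (-b * r ^ 2) = (2 * b)⁻¹ := by
  have := integral_rpow_mul_exp_neg_mul_rpow two_pos (by norm_num : (-1 : ℝ) < 1) hb
  norm_num [rpow_two, rpow_neg_one] at this ⊢
  rw [this]

theorem integral_Ioi_sq_mul_exp_neg_mul_sq {b : ℝ} (hb : 0 < b) :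
    ∫ r in Ioi (0 : ℝ), r ^ 2 * exp (-b * r ^ 2) = √π / (4 * b * √b) := by
  have := integral_rpow_mul_exp_neg_mul_rpow two_pos (by norm_num : (-1 : ℝ) < 2) hb
  have hGamma : Gamma (3 / 2) = √π / 2 := by
    rw [show (3 / 2 : ℝ) = 1 / 2 + 1 by norm_num, Gamma_add_one (by norm_num), Gamma_one_half_eq]
    ring
  have hpow : b ^ (-(3 / 2) : ℝ) = (b * √b)⁻¹ := by
    rw [rpow_neg hb.le, show (3 / 2 : ℝ) = 1 + 1 / 2 by norm_num, rpow_add hb, rpow_one,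
      ← sqrt_eq_rpow]
  norm_num [rpow_two] at this ⊢
  rw [this, hGamma, hpow]
  field_simp
  norm_num

namespace ProbabilityTheory

theorem integral_abs_gaussianReal (v : ℝ≥0) :
    ∫ t, |t| ∂gaussianReal 0 v = √(2 * v / π) := by
  by_cases hv : v = 0
  · simp [hv, gaussianReal_zero_var]
  have hv' : (0 : ℝ) < v := by positivity
  have hdensity : ∀ t : ℝ, gaussianPDFReal 0 v t • |t| =
      (√(2 * π * v))⁻¹ * (|t| * exp (-(2 * (v : ℝ))⁻¹ * |t| ^ 2)) := by
    intro t
    rw [gaussianPDFReal_def, sq_abs, smul_eq_mul]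
    ring_nf
  rw [integral_gaussianReal_eq_integral_smul hv]
  simp only [hdensity]
  rw [integral_comp_abs (f := fun r => (√(2 * π * v))⁻¹ * (r * exp (-(2 * (v : ℝ))⁻¹ * r ^ 2))),
    integral_const_mul, integral_Ioi_mul_exp_neg_mul_sq (by positivity),
    sqrt_div' _ pi_pos.le, show 2 * π * v = 2 * v * π by ring, sqrt_mul (by positivity)]
  have : 0 < √(2 * (v : ℝ)) := by positivity
  field_simp
  rw [sq_sqrt (by positivity)]

theorem gaussianReal_prod_map_mul_add_mul (a b m₁ m₂ : ℝ) (v₁ v₂ : ℝ≥0) :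
    ((gaussianReal m₁ v₁).prod (gaussianReal m₂ v₂)).map (fun p => a * p.1 + b * p.2) =
      gaussianReal (a * m₁ + b * m₂)
        (.mk (a ^ 2) (sq_nonneg a) * v₁ + .mk (b ^ 2) (sq_nonneg b) * v₂) := by
  rw [← gaussianReal_conv_gaussianReal, ← gaussianReal_map_const_mul,
    ← gaussianReal_map_const_mul, Measure.conv,
    Measure.map_prod_map _ _ (by fun_prop) (by fun_prop),
    Measure.map_map (by fun_prop) (by fun_prop)]
  rfl

theorem integral_abs_mul_add_mul_gaussianReal_prod (a b : ℝ) (v : ℝ≥0) :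
    ∫ p, |a * p.1 + b * p.2| ∂(gaussianReal 0 v).prod (gaussianReal 0 v) =
      √(a ^ 2 + b ^ 2) * √(2 * v / π) := by
  have hmap := integral_map (μ := (gaussianReal 0 v).prod (gaussianReal 0 v))
    (φ := fun p => a * p.1 + b * p.2) (f := fun t => |t|) (by fun_prop) (by fun_prop)
  rw [← hmap, gaussianReal_prod_map_mul_add_mul, mul_zero, mul_zero, add_zero,
    integral_abs_gaussianReal, ← sqrt_mul (by positivity)]
  congr 1
  push_cast
  ring

theorem integral_gaussianReal_prod_eq_integral_smul {E : Type*} [NormedAddCommGroup E]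
    [NormedSpace ℝ E] {m₁ m₂ : ℝ} {v₁ v₂ : ℝ≥0} (hv₁ : v₁ ≠ 0) (hv₂ : v₂ ≠ 0) (f : ℝ × ℝ → E) :
    ∫ p, f p ∂(gaussianReal m₁ v₁).prod (gaussianReal m₂ v₂) =
      ∫ p, (gaussianPDFReal m₁ v₁ p.1 * gaussianPDFReal m₂ v₂ p.2) • f p := by
  rw [gaussianReal_of_var_ne_zero _ hv₁, gaussianReal_of_var_ne_zero _ hv₂,
    prod_withDensity (measurable_gaussianPDF _ _) (measurable_gaussianPDF _ _),
    ← Measure.volume_eq_prod, integral_withDensity_eq_integral_toReal_smul (by fun_prop)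
      (ae_of_all _ fun _ => ENNReal.mul_lt_top gaussianPDF_lt_top gaussianPDF_lt_top)]
  simp only [ENNReal.toReal_mul, toReal_gaussianPDF]

theorem integral_sqrt_sq_add_sq_gaussianReal_prod (v : ℝ≥0) :
    ∫ p, √(p.1 ^ 2 + p.2 ^ 2) ∂(gaussianReal 0 v).prod (gaussianReal 0 v) = √(π * v / 2) := by
  by_cases hv : v = 0
  · simp [hv, gaussianReal_zero_var, Measure.dirac_prod_dirac]
  have hv' : (0 : ℝ) < v := by positivity
  have hdensity : ∀ p : ℝ × ℝ, (gaussianPDFReal 0 v p.1 * gaussianPDFReal 0 v p.2) •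
      √(p.1 ^ 2 + p.2 ^ 2) = (2 * π * v)⁻¹ *
        (exp (-(2 * (v : ℝ))⁻¹ * √(p.1 ^ 2 + p.2 ^ 2) ^ 2) * √(p.1 ^ 2 + p.2 ^ 2)) := by
    intro p
    have hexp : exp (-(2 * (v : ℝ))⁻¹ * (p.1 ^ 2 + p.2 ^ 2)) =
        exp (-(p.1 - 0) ^ 2 / (2 * v)) * exp (-(p.2 - 0) ^ 2 / (2 * v)) := by
      rw [← exp_add]
      ring_nf
    have hnorm : (2 * π * v)⁻¹ = (√(2 * π * v))⁻¹ * (√(2 * π * v))⁻¹ := by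
      rw [← mul_inv, mul_self_sqrt (by positivity)]
    rw [sq_sqrt (by positivity), gaussianPDFReal_def, smul_eq_mul, hexp, hnorm]
    ring
  have hradial : ∀ r : ℝ, r • ((2 * π * v)⁻¹ * (exp (-(2 * (v : ℝ))⁻¹ * r ^ 2) * r)) =
      (2 * π * v)⁻¹ * (r ^ 2 * exp (-(2 * (v : ℝ))⁻¹ * r ^ 2)) := by
    intro r
    rw [smul_eq_mul]
    ring
  rw [integral_gaussianReal_prod_eq_integral_smul hv hv, funext hdensity,
    integral_comp_sqrt_sq_add_sq (fun r => (2 * π * v)⁻¹ * (exp (-(2 * (v : ℝ))⁻¹ * r ^ 2) * r))]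
  simp only [hradial]
  rw [integral_const_mul, integral_Ioi_sq_mul_exp_neg_mul_sq (by positivity), smul_eq_mul,
    sqrt_inv, show π * v / 2 = π * (2 * v) / 2 ^ 2 by ring, sqrt_div' _ (by positivity),
    sqrt_sq zero_le_two, sqrt_mul pi_pos.le]
  have : 0 < √(2 * (v : ℝ)) := by positivity
  field_simp
  norm_num

theorem integrable_abs_mul_sub_mul_gaussianReal (v : ℝ≥0) :
    Integrable (fun q : (ℝ × ℝ) × (ℝ × ℝ) => |q.1.1 * q.2.1 - q.1.2 * q.2.2|)
      (((gaussianReal 0 v).prod (gaussianReal 0 v)).prod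
        ((gaussianReal 0 v).prod (gaussianReal 0 v))) := by
  have habs : Integrable (fun t : ℝ => |t|) (gaussianReal 0 v) :=
    ((memLp_id_gaussianReal' 1 ENNReal.one_ne_top).integrable le_rfl).abs
  have hfst := habs.comp_fst (gaussianReal 0 v)
  have hsnd := habs.comp_snd (gaussianReal 0 v)
  refine ((hfst.mul_prod hfst).add (hsnd.mul_prod hsnd)).mono' (by fun_prop)
    (ae_of_all _ fun q => ?_)
  rw [Real.norm_eq_abs, abs_abs, Pi.add_apply, ← abs_mul, ← abs_mul]
  exact abs_sub _ _

theorem integral_abs_mul_sub_mul_gaussianReal (v : ℝ≥0) :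
    ∫ q, |q.1.1 * q.2.1 - q.1.2 * q.2.2| ∂((gaussianReal 0 v).prod (gaussianReal 0 v)).prod
        ((gaussianReal 0 v).prod (gaussianReal 0 v)) = v := by
  have hconditional (p : ℝ × ℝ) :
      ∫ q, |p.1 * q.1 - p.2 * q.2| ∂(gaussianReal 0 v).prod (gaussianReal 0 v) =
        √(p.1 ^ 2 + p.2 ^ 2) * √(2 * v / π) := by
    simpa [sub_eq_add_neg] using integral_abs_mul_add_mul_gaussianReal_prod p.1 (-p.2) v
  rw [integral_prod _ (integrable_abs_mul_sub_mul_gaussianReal v)]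
  simp only [hconditional]
  rw [integral_mul_const, integral_sqrt_sq_add_sq_gaussianReal_prod, ← sqrt_mul (by positivity),
    show π * v / 2 * (2 * v / π) = (v : ℝ) ^ 2 by field_simp, sqrt_sq v.coe_nonneg]

theorem iIndepFun.map_prodMk_prodMk_eq_prod {Ω β : Type*} [MeasurableSpace Ω]
    [MeasurableSpace β] {μ : Measure Ω} {X : Fin 4 → Ω → β} (h : iIndepFun X μ)
    (hX : ∀ i, Measurable (X i)) :
    μ.map (fun ω => ((X 0 ω, X 1 ω), (X 2 ω, X 3 ω))) =
      ((μ.map (X 0)).prod (μ.map (X 1))).prod ((μ.map (X 2)).prod (μ.map (X 3))) := by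
  have := h.isProbabilityMeasure
  rw [(h.indepFun_prodMk_prodMk hX 0 1 2 3 (by decide) (by decide) (by decide)
      (by decide)).map_prod_eq_prod_map_map (by fun_prop) (by fun_prop),
    (h.indepFun (by decide : (0 : Fin 4) ≠ 1)).map_prod_eq_prod_map_map (by fun_prop)
      (by fun_prop),
    (h.indepFun (by decide : (2 : Fin 4) ≠ 3)).map_prod_eq_prod_map_map (by fun_prop)
      (by fun_prop)]

end ProbabilityTheory

theorem stmt4_general {Ω : Type*} [MeasurableSpace Ω] (μ : Measure Ω)
    (x y z w : Ω → ℝ)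
    (hmeas : ∀ f ∈ ({x, y, z, w} : Set (Ω → ℝ)), Measurable f)
    (hindep : iIndepFun ![x, y, z, w] μ)
    (hx : μ.map x = gaussianReal 0 (1/2)) (hy : μ.map y = gaussianReal 0 (1/2))
    (hz : μ.map z = gaussianReal 0 (1/2)) (hw : μ.map w = gaussianReal 0 (1/2)) :
    ∫ ω, |x ω * z ω - y ω * w ω| ∂μ = 1 / 2 := by
  have hX : ∀ i, Measurable (![x, y, z, w] i) := by
    intro i
    fin_cases i <;> exact hmeas _ (by simp)
  have hjoint : Measurable fun ω => ((x ω, y ω), (z ω, w ω)) :=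
    ((hX 0).prodMk (hX 1)).prodMk ((hX 2).prodMk (hX 3))
  have hlaw := hindep.map_prodMk_prodMk_eq_prod hX
  simp only [Matrix.cons_val, hx, hy, hz, hw] at hlaw
  have hmain := integral_abs_mul_sub_mul_gaussianReal (1 / 2)
  rw [← hlaw, integral_map hjoint.aemeasurable (by fun_prop)] at hmain
  simpa using hmain

theorem stmt4 {Ω : Type*} [MeasurableSpace Ω] (μ : Measure Ω) [IsProbabilityMeasure μ]
    (x y z w : Ω → ℝ)
    (hmeas : ∀ f ∈ ({x, y, z, w} : Set (Ω → ℝ)), Measurable f)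
    (hindep : iIndepFun ![x, y, z, w] μ)
    (hx : μ.map x = gaussianReal 0 (1/2)) (hy : μ.map y = gaussianReal 0 (1/2))
    (hz : μ.map z = gaussianReal 0 (1/2)) (hw : μ.map w = gaussianReal 0 (1/2)) :
    ∫ ω, |x ω * z ω - y ω * w ω| ∂μ = 1 / 2 :=
  stmt4_general μ x y z w hmeas hindep hx hy hz hw
end
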